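/- arXiv:2106.11454 — 2 statements merged into one kernel-verified Lean document; each statement's English description precedes it below -/
import Mathlib

section
/- Suppose a sequence of agents satisfies t_1^(g) - r_1 ≤ dist_1, t_i^(g) = max(r_i, t_{i-1}^(g)) + dist_i for i ≥ 2, and r_1 ≤ r_2 ≤ ... ≤ r_m. Then for every i, the service time satisfies t_i^(g) - r_i ≤ Σ_{j=1}^{i} dist_j. -/
/-! Since release times are nondecreasing, the waiting time `t i - r i` of agent `i` exceeds
that of agent `i - 1` by at most `dist i`: starting at `max (r i) (t (i-1))` costs agent `i`
no more than `t (i-1) - r (i-1)` beyond its own release. Summing these increments gives the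
prefix-sum bound. -/

theorem tsub_le_tsub_add_of_eq_max_add {t t' r r' d : ℕ} (ht' : t' = max r' t + d)
    (hr : r ≤ r') : t' - r' ≤ t - r + d := by
  omega

/-- SEQUENCE: agent 1 has service time at most `dist 1`, and each later agent
starts at `max (r i) (t (i-1))` and travels `dist i` steps; release times are
nondecreasing.  Then each service time is bounded by the prefix sum of
distances. -/
theorem stmt_1 (m : ℕ) (t r dist : ℕ → ℕ)
    (h1 : t 1 - r 1 ≤ dist 1)
    (hrec : ∀ i, 2 ≤ i → i ≤ m → t i = max (r i) (t (i - 1)) + dist i)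
    (hr : ∀ i j, 1 ≤ i → i ≤ j → j ≤ m → r i ≤ r j) :
    ∀ i ∈ Finset.Icc 1 m, t i - r i ≤ ∑ j ∈ Finset.Icc 1 i, dist j := by
  intro i hi
  obtain ⟨hi1, him⟩ := Finset.mem_Icc.mp hi
  induction i, hi1 using Nat.le_induction with
  | base => simpa using h1
  | succ n hn ih =>
    have hstep : t (n + 1) = max (r (n + 1)) (t n) + dist (n + 1) := by
      simpa using hrec (n + 1) (by omega) him
    have hwait := tsub_le_tsub_add_of_eq_max_add hstep (hr n (n + 1) hn n.le_succ him)
    have hprev := ih (Finset.mem_Icc.mpr ⟨hn, by omega⟩) (by omega)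
    rw [Finset.sum_Icc_succ_top (by omega)]
    omega
end

section
/- Under the assumptions of the SEQUENCE makespan bound (t_m^(g) ≤ r_n + Σ_{j=n}^{m} dist_j where n is the latest index with r_n > r_1 + Σ_{j<n} dist_j, or n = 1), and given that the optimal makespan OPT satisfies OPT ≥ max_{j∈[n,m]} (r_n + dist_j), the makespan of SEQUENCE is at most m · OPT, i.e., t_m^(g) ≤ m · OPT (assuming dist_j ≥ 1 for all j and m ≥ 1). -/
theorem Finset.add_sum_le_sum_const_add {ι M : Type*} [AddCommMonoid M] [PartialOrder M]
    [IsOrderedAddMonoid M] [CanonicallyOrderedAdd M] {s : Finset ι} (hs : s.Nonempty)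
    (a : M) (f : ι → M) : a + ∑ i ∈ s, f i ≤ ∑ i ∈ s, (a + f i) := by
  rw [Finset.sum_add_distrib, Finset.sum_const]
  gcongr
  exact le_smul_of_one_le_left zero_le (Finset.one_le_card.2 hs)

theorem stmt_3_general (m n OPT : ℕ) (t r dist : ℕ → ℕ)
    (hn1 : 1 ≤ n) (hnm : n ≤ m)
    (hseq : t m ≤ r n + ∑ j ∈ Finset.Icc n m, dist j)
    (hopt : ∀ j ∈ Finset.Icc n m, r n + dist j ≤ OPT) :
    t m ≤ m * OPT := by
  calc t m ≤ r n + ∑ j ∈ Finset.Icc n m, dist j := hseq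
    _ ≤ ∑ j ∈ Finset.Icc n m, (r n + dist j) :=
      Finset.add_sum_le_sum_const_add (Finset.nonempty_Icc.2 hnm) _ _
    _ ≤ (Finset.Icc n m).card * OPT := by
      simpa using Finset.sum_le_card_nsmul _ _ _ hopt
    _ ≤ m * OPT := Nat.mul_le_mul_right _ (by rw [Nat.card_Icc]; omega)

/-- If the SEQUENCE makespan satisfies `t m ≤ r n + ∑_{j=n}^{m} dist j`,
each distance is at least 1, and the optimal makespan `OPT` satisfies
`OPT ≥ r n + dist j` for all `j ∈ [n, m]`, then `t m ≤ m * OPT`. -/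
theorem stmt_3 (m n OPT : ℕ) (t r dist : ℕ → ℕ)
    (hm : 1 ≤ m) (hn1 : 1 ≤ n) (hnm : n ≤ m)
    (hdist : ∀ j ∈ Finset.Icc 1 m, 1 ≤ dist j)
    (hseq : t m ≤ r n + ∑ j ∈ Finset.Icc n m, dist j)
    (hopt : ∀ j ∈ Finset.Icc n m, r n + dist j ≤ OPT) :
    t m ≤ m * OPT :=
  stmt_3_general m n OPT t r dist hn1 hnm hseq hopt
end
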